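/- arXiv:1811.04679 — 2 statements merged into one kernel-verified Lean document; each statement's English description precedes it below -/
import Mathlib

section
/- Let M = (Q, A, τ) be a self-invertible Mealy automaton, let a ∈ A, and let Lan(a) = ⋃_{k ≥ 0} { s·aᵏ : s ∈ Q* }. Then there exist natural numbers T and d such that: (i) every v ∈ Lan(a) with |v| ≥ T has degree exactly d in Lan(a); and (ii) for every word v ∈ A*, v ∈ Lan(a) if and only if every subword of v of length at most T + 1 belongs to Lan(a). -/
namespace AutGrp

/-- A Mealy automaton with state set `Q` and alphabet `A`:
`step q a = (q · a, q @ a)` (output letter, next state). -/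
structure Mealy (Q A : Type*) where
  step : Q → A → A × Q

namespace Mealy

variable {Q A : Type*}

/-- The output letter `q · a`. -/
def o (M : Mealy Q A) (q : Q) (a : A) : A := (M.step q a).1

/-- The next state `q @ a`. -/
def t (M : Mealy Q A) (q : Q) (a : A) : Q := (M.step q a).2

/-- Action of a single state on a word of letters: `q · w`. -/
def actA (M : Mealy Q A) : Q → List A → List A
  | _, [] => []
  | q, a :: w => M.o q a :: M.actA (M.t q a) w

/-- State reached from `q` after reading the word `w`: `q @ w`. -/
def stA (M : Mealy Q A) : Q → List A → Q
  | q, [] => q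
  | q, a :: w => M.stA (M.t q a) w

/-- Action of a word of states on a word of letters: `s · u` (rightmost state acts first). -/
def actW (M : Mealy Q A) : List Q → List A → List A
  | [], u => u
  | q :: s, u => M.actA q (M.actW s u)

/-- Word of states reached after reading `u`: `s @ u`. -/
def stW (M : Mealy Q A) : List Q → List A → List Q
  | [], _ => []
  | q :: s, u => M.stA q (M.actW s u) :: M.stW s u

/-- `M` is invertible if each state acts on `A` by a bijection. -/
def Invertible (M : Mealy Q A) : Prop := ∀ q : Q, Function.Bijective (M.o q)

/-- `M` is reversible if each letter acts on `Q` by a bijection. -/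
def Reversible (M : Mealy Q A) : Prop := ∀ a : A, Function.Bijective (fun q => M.t q a)

theorem actA_append (M : Mealy Q A) (q : Q) (x y : List A) :
    M.actA q (x ++ y) = M.actA q x ++ M.actA (M.stA q x) y := by
  induction x generalizing q with
  | nil => simp [actA, stA]
  | cons a w ih => simp [actA, stA, ih]

theorem stA_append (M : Mealy Q A) (q : Q) (x y : List A) :
    M.stA q (x ++ y) = M.stA (M.stA q x) y := by
  induction x generalizing q with
  | nil => simp [stA]
  | cons a w ih => simp [stA, ih]

theorem actW_append_states (M : Mealy Q A) (s u : List Q) (w : List A) :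
    M.actW (s ++ u) w = M.actW s (M.actW u w) := by
  induction s with
  | nil => simp [actW]
  | cons q s ih => simp [actW, ih]

theorem actW_append (M : Mealy Q A) (s : List Q) (x y : List A) :
    M.actW s (x ++ y) = M.actW s x ++ M.actW (M.stW s x) y := by
  induction s with
  | nil => simp [actW, stW]
  | cons q s ih => simp [actW, stW, ih, actA_append]

theorem stW_append (M : Mealy Q A) (s : List Q) (x y : List A) :
    M.stW s (x ++ y) = M.stW (M.stW s x) y := by
  induction s with
  | nil => simp [stW]
  | cons q s ih => simp [stW, actW, ih, actW_append, stA_append]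

theorem actW_stW_congr (M : Mealy Q A) {p p' : List Q}
    (h : ∀ w : List A, M.actW p w = M.actW p' w) (u w : List A) :
    M.actW (M.stW p u) w = M.actW (M.stW p' u) w := by
  have h1 := M.actW_append p u w
  have h2 := M.actW_append p' u w
  rw [h u, h (u ++ w)] at h1
  rw [h1] at h2
  exact List.append_cancel_left h2

/-- The congruence `~Q` on the free monoid `Q*`: two words of states are equivalent
iff they act identically on `A*`. -/
def conQ (M : Mealy Q A) : Con (FreeMonoid Q) where
  r s u := ∀ w : List A, M.actW s.toList w = M.actW u.toList w
  iseqv := ⟨fun _ _ => rfl, fun h w => (h w).symm, fun h1 h2 w => (h1 w).trans (h2 w)⟩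
  mul' := by
    intro a b c d h1 h2 w
    simp only [FreeMonoid.toList_mul, actW_append_states]
    rw [h2 w, h1 (M.actW d.toList w)]

/-- The congruence `~A` on the free monoid `A*`: `u ~A v` iff `s @ u = s @ v` for all `s ∈ Q*`. -/
def conA (M : Mealy Q A) : Con (FreeMonoid A) where
  r u v := ∀ s : List Q, M.stW s u.toList = M.stW s v.toList
  iseqv := ⟨fun _ _ => rfl, fun h s => (h s).symm, fun h1 h2 s => (h1 s).trans (h2 s)⟩
  mul' := by
    intro a b c d h1 h2 s
    simp only [FreeMonoid.toList_mul, stW_append]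
    rw [h1 s, h2 (M.stW s b.toList)]

/-- The congruence `~D` on the free monoid `A*`: `u ~D v` iff `s @ u ~Q s @ v` for all `s ∈ Q*`. -/
def conD (M : Mealy Q A) : Con (FreeMonoid A) where
  r u v := ∀ (s : List Q) (w : List A),
    M.actW (M.stW s u.toList) w = M.actW (M.stW s v.toList) w
  iseqv := ⟨fun _ _ _ => rfl, fun h s w => (h s w).symm,
    fun h1 h2 s w => (h1 s w).trans (h2 s w)⟩
  mul' := by
    intro a b c d h1 h2 s w
    simp only [FreeMonoid.toList_mul, stW_append]
    calc M.actW (M.stW (M.stW s a.toList) c.toList) w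
        = M.actW (M.stW (M.stW s b.toList) c.toList) w :=
          M.actW_stW_congr (h1 s) c.toList w
      _ = M.actW (M.stW (M.stW s b.toList) d.toList) w := h2 _ w

/-- The automaton semigroup (monoid) `P_M = Q* / ~Q`. -/
abbrev PM (M : Mealy Q A) : Type _ := M.conQ.Quotient

/-- The dual automaton semigroup (monoid) `D_M = A* / ~A`. -/
abbrev DM (M : Mealy Q A) : Type _ := M.conA.Quotient

/-- The monoid `D'_M = A* / ~D`. -/
abbrev DM' (M : Mealy Q A) : Type _ := M.conD.Quotient

/-- The class in `P_M` of a word of states. -/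
def PMmk (M : Mealy Q A) (s : List Q) : M.PM := M.conQ.mk' (FreeMonoid.ofList s)

/-- The class in `D_M` of a word of letters. -/
def DMmk (M : Mealy Q A) (u : List A) : M.DM := M.conA.mk' (FreeMonoid.ofList u)

/-- The class in `D'_M` of a word of letters. -/
def DM'mk (M : Mealy Q A) (u : List A) : M.DM' := M.conD.mk' (FreeMonoid.ofList u)

/-- `M` is self-invertible if `P_M` is a group. -/
def SelfInvertible (M : Mealy Q A) : Prop :=
  ∀ x : M.PM, ∃ y : M.PM, x * y = 1 ∧ y * x = 1

/-- The enriched automaton of an invertible automaton: states `Q ⊕ Q`, where `Sum.inl q` is `q`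
and `Sum.inr q` is the formal inverse `q⁻¹`; `τ̃(q,a) = τ(q,a)` and
`τ̃(q⁻¹, q·a) = (a, (q@a)⁻¹)`. -/
noncomputable def enriched [Nonempty A] (M : Mealy Q A) : Mealy (Q ⊕ Q) A where
  step := fun p b =>
    match p with
    | Sum.inl q => (M.o q b, Sum.inl (M.t q b))
    | Sum.inr q =>
        (Function.invFun (M.o q) b, Sum.inr (M.t q (Function.invFun (M.o q) b)))

/-- The monoid `Δ_M` presented by generators `Q ⊔ A` and relations `q a = (q·a)(q@a)`. -/
def deltaCon (M : Mealy Q A) : Con (FreeMonoid (Q ⊕ A)) :=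
  conGen (fun w₁ w₂ => ∃ (q : Q) (a : A),
    w₁ = FreeMonoid.of (Sum.inl q) * FreeMonoid.of (Sum.inr a) ∧
    w₂ = FreeMonoid.of (Sum.inr (M.o q a)) * FreeMonoid.of (Sum.inl (M.t q a)))

end Mealy

/-- Evaluation of a positive word in the letters `y` (for `true`) and `z` (for `false`). -/
def evalPair {S : Type*} [Monoid S] (y z : S) : List Bool → S
  | [] => 1
  | b :: l => (bif b then y else z) * evalPair y z l

/-- `y` and `z` freely generate a free subsemigroup of rank two: distinct nonempty
positive words in `y, z` represent distinct elements. -/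
def IsFreePair {S : Type*} [Monoid S] (y z : S) : Prop :=
  ∀ l₁ l₂ : List Bool, l₁ ≠ [] → l₂ ≠ [] →
    evalPair y z l₁ = evalPair y z l₂ → l₁ = l₂

/-- `x` has infinite order: `{x, x², x³, …}` is infinite. -/
def InfiniteOrder {S : Type*} [Monoid S] (x : S) : Prop :=
  (Set.range fun n : ℕ => x ^ (n + 1)).Infinite

/-- The length-`n` prefix of a sequence. -/
def seqTake {A : Type*} (ξ : ℕ → A) (n : ℕ) : List A := (List.range n).map ξ

/-- The `n`-th power `u^n` of a finite word. -/
def wpow {A : Type*} (u : List A) : ℕ → List A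
  | 0 => []
  | n + 1 => u ++ wpow u n

/-- The eventually periodic sequence `u v v v ⋯`. -/
noncomputable def prePeriodic {A : Type*} [Nonempty A] (u v : List A) : ℕ → A :=
  fun n => if n < u.length then u.getD n (Classical.arbitrary A)
    else v.getD ((n - u.length) % v.length) (Classical.arbitrary A)

/-- The periodic sequence `u^ω = u u u ⋯`. -/
noncomputable def periodic {A : Type*} [Nonempty A] (u : List A) : ℕ → A :=
  prePeriodic [] u

namespace Mealy

/-- The action of a word of states on a sequence: `s · ξ` is the sequence whose
length-`n` prefix is `s · (length-`n` prefix of `ξ`)`. -/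
noncomputable def actSeq {Q A : Type*} [Nonempty A] (M : Mealy Q A)
    (s : List Q) (ξ : ℕ → A) : ℕ → A :=
  fun n => (M.actW s (seqTake ξ (n + 1))).getD n (Classical.arbitrary A)

/-- The language of all prefixes of the orbit of `a^ω` under `P_M`. -/
def Lan {Q A : Type*} (M : Mealy Q A) (a : A) : Set (List A) :=
  {v | ∃ (k : ℕ) (s : List Q), v = M.actW s (List.replicate k a)}

/-- The degree of `v` in `Lan(a)`: the number of letters `b` with `v b ∈ Lan(a)`. -/
noncomputable def deg {Q A : Type*} (M : Mealy Q A) (a : A) (v : List A) : ℕ :=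
  {b : A | v ++ [b] ∈ M.Lan a}.ncard

end Mealy

/-- A language is regular if it is recognized by a deterministic finite automaton. -/
def IsRegular {A : Type*} (L : Set (List A)) : Prop :=
  ∃ (σ : Type) (_ : Fintype σ) (dfa : DFA A σ), ∀ w : List A, w ∈ dfa.accepts ↔ w ∈ L

/-!
Self-invertibility makes every word of states act bijectively on the one-letter extensions of a
word, so the degree of a word of `Lan a` depends only on its length. As `Lan a` is closed under
taking factors, the degree of `aᵏ` is antitone in `k`, hence constant from some `T` on. For `v`
in `Lan a` of length at least `T`, the extensions of `v` are then among those of its length-`T`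
suffix and equally many, so they coincide: whether `v b ∈ Lan a` is decided by a factor of
length `T + 1`.
-/

namespace Mealy

variable {Q A : Type*} (M : Mealy Q A)

theorem actA_length (q : Q) (w : List A) : (M.actA q w).length = w.length := by
  induction w generalizing q with
  | nil => rfl
  | cons b w ih => simp [actA, ih]

theorem actW_length (s : List Q) (w : List A) : (M.actW s w).length = w.length := by
  induction s with
  | nil => rfl
  | cons q s ih => simp [actW, actA_length, ih]

theorem actW_append_singleton (s : List Q) (v : List A) (b : A) :
    ∃ c : A, M.actW s (v ++ [b]) = M.actW s v ++ [c] := by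
  obtain ⟨c, hc⟩ := List.length_eq_one_iff.mp (M.actW_length (M.stW s v) [b])
  exact ⟨c, by rw [actW_append, hc]⟩

theorem SelfInvertible.exists_inverse {M : Mealy Q A} (hg : M.SelfInvertible) (s : List Q) :
    ∃ t : List Q, Function.LeftInverse (M.actW t) (M.actW s) ∧
      Function.RightInverse (M.actW t) (M.actW s) := by
  obtain ⟨y, hsy, hys⟩ := hg (M.PMmk s)
  obtain ⟨m, rfl⟩ := M.conQ.mk'_surjective y
  have act_eq_self (x : FreeMonoid Q) (hx : M.conQ.mk' x = 1) (u : List A) :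
      M.actW x.toList u = u :=
    M.conQ.eq.mp hx u
  refine ⟨m.toList, fun u => ?_, fun u => ?_⟩
  · simpa [actW_append_states] using act_eq_self (m * .ofList s) (by rw [map_mul]; exact hys) u
  · simpa [actW_append_states] using act_eq_self (.ofList s * m) (by rw [map_mul]; exact hsy) u

variable {M} {a : A}

theorem actW_mem_Lan (s : List Q) {v : List A} (hv : v ∈ M.Lan a) : M.actW s v ∈ M.Lan a := by
  obtain ⟨k, p, rfl⟩ := hv
  exact ⟨k, s ++ p, (M.actW_append_states s p _).symm⟩

theorem mem_Lan_of_append_mem {x y : List A} (h : x ++ y ∈ M.Lan a) :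
    x ∈ M.Lan a ∧ y ∈ M.Lan a := by
  obtain ⟨k, s, hxy⟩ := h
  obtain rfl : k = x.length + y.length := by
    simpa [actW_length] using (congrArg List.length hxy).symm
  rw [List.replicate_add, actW_append] at hxy
  obtain ⟨hx, hy⟩ := List.append_inj hxy (by simp [actW_length])
  exact ⟨⟨_, s, hx⟩, ⟨_, _, hy⟩⟩

theorem mem_Lan_of_infix {w v : List A} (h : w <:+: v) (hv : v ∈ M.Lan a) : w ∈ M.Lan a := by
  obtain ⟨p, q, rfl⟩ := h
  exact (mem_Lan_of_append_mem (mem_Lan_of_append_mem hv).1).2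

theorem append_singleton_mem_Lan_of_suffix {w v : List A} (h : w <:+ v) {b : A}
    (hv : v ++ [b] ∈ M.Lan a) : w ++ [b] ∈ M.Lan a :=
  mem_Lan_of_infix (List.suffix_append_self_iff.mpr h).isInfix hv

variable [Finite A]

theorem deg_le_deg_of_suffix {w v : List A} (h : w <:+ v) : M.deg a v ≤ M.deg a w :=
  Set.ncard_le_ncard (fun _ => append_singleton_mem_Lan_of_suffix h) (Set.toFinite _)

theorem append_singleton_mem_Lan_of_suffix_of_deg_le {w v : List A} (h : w <:+ v)
    (hdeg : M.deg a w ≤ M.deg a v) {b : A} (hw : w ++ [b] ∈ M.Lan a) : v ++ [b] ∈ M.Lan a := by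
  have hext : {c | v ++ [c] ∈ M.Lan a} = {c | w ++ [c] ∈ M.Lan a} :=
    Set.eq_of_subset_of_ncard_le (fun _ => append_singleton_mem_Lan_of_suffix h) hdeg
      (Set.toFinite _)
  exact (Set.ext_iff.mp hext b).mpr hw

theorem deg_le_deg_actW {s : List Q} (hs : Function.Injective (M.actW s)) (v : List A) :
    M.deg a v ≤ M.deg a (M.actW s v) := by
  choose f hf using M.actW_append_singleton s v
  refine Set.ncard_le_ncard_of_injOn f (fun b hb => ?_) (fun b _ b' _ hbb' => ?_) (Set.toFinite _)
  · simpa [hf] using actW_mem_Lan s hb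
  · simpa using hs (by rw [hf, hf, hbb'] : M.actW s (v ++ [b]) = M.actW s (v ++ [b']))

theorem deg_actW (hg : M.SelfInvertible) (s : List Q) (v : List A) :
    M.deg a (M.actW s v) = M.deg a v := by
  obtain ⟨t, hts, hst⟩ := hg.exists_inverse s
  refine le_antisymm ?_ (deg_le_deg_actW hts.injective v)
  simpa [hts v] using deg_le_deg_actW hst.injective (M.actW s v)

theorem deg_eq_deg_replicate (hg : M.SelfInvertible) {v : List A} (hv : v ∈ M.Lan a) :
    M.deg a v = M.deg a (List.replicate v.length a) := by
  obtain ⟨k, s, rfl⟩ := hv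
  rw [deg_actW hg, actW_length, List.length_replicate]

variable (M a) in
theorem exists_deg_replicate_eq :
    ∃ T, ∀ k, T ≤ k → M.deg a (List.replicate k a) = M.deg a (List.replicate T a) := by
  have hanti : Antitone fun k => M.deg a (List.replicate k a) :=
    antitone_nat_of_succ_le fun _ => deg_le_deg_of_suffix ⟨[a], rfl⟩
  obtain ⟨T, hT⟩ := WellFoundedLT.antitone_chain_condition hanti
  exact ⟨T, fun k hk => (hT k hk).symm⟩

theorem mem_Lan_of_forall_infix {T d : ℕ} (hdeg : ∀ v ∈ M.Lan a, T ≤ v.length → M.deg a v = d)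
    {v : List A} (h : ∀ w : List A, w <:+: v → w.length ≤ T + 1 → w ∈ M.Lan a) :
    v ∈ M.Lan a := by
  induction v using List.reverseRecOn with
  | nil => exact ⟨0, [], rfl⟩
  | append_singleton v b ih =>
    have hv : v ∈ M.Lan a :=
      ih fun w hw => h w (hw.trans (List.prefix_append v [b]).isInfix)
    by_cases hshort : v.length < T + 1
    · exact h _ (List.infix_refl _) (by simpa using hshort)
    set w := v.drop (v.length - T)
    have hwv : w <:+ v := List.drop_suffix _ v
    have hwlen : w.length = T := by simp only [w, List.length_drop]; omega
    have hw : w ∈ M.Lan a := mem_Lan_of_infix hwv.isInfix hv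
    refine append_singleton_mem_Lan_of_suffix_of_deg_le hwv ?_ ?_
    · rw [hdeg w hw hwlen.ge, hdeg v hv (by omega)]
    · exact h _ (List.suffix_append_self_iff.mpr hwv).isInfix (by simp [hwlen])

end Mealy

theorem stmt15_general {Q A : Type*} [Fintype A]
    (M : Mealy Q A) (hg : M.SelfInvertible) (a : A) :
    ∃ T d : ℕ,
      (∀ v ∈ M.Lan a, T ≤ v.length → M.deg a v = d) ∧
      (∀ v : List A, v ∈ M.Lan a ↔
        ∀ w : List A, w <:+: v → w.length ≤ T + 1 → w ∈ M.Lan a) := by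
  obtain ⟨T, hT⟩ := Mealy.exists_deg_replicate_eq M a
  have hdeg : ∀ v ∈ M.Lan a, T ≤ v.length → M.deg a v = M.deg a (List.replicate T a) :=
    fun v hv hlen => (Mealy.deg_eq_deg_replicate hg hv).trans (hT _ hlen)
  exact ⟨T, _, hdeg, fun v =>
    ⟨fun hv _ hw _ => Mealy.mem_Lan_of_infix hw hv, Mealy.mem_Lan_of_forall_infix hdeg⟩⟩

/-- For a self-invertible Mealy automaton `M` and a letter `a`, there are
`T, d ∈ ℕ` such that every `v ∈ Lan(a)` with `|v| ≥ T` has degree exactly `d`, and a word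
belongs to `Lan(a)` iff all its subwords of length at most `T + 1` do. -/
theorem stmt15 {Q A : Type*} [Fintype Q] [Nonempty Q] [Fintype A] [Nonempty A]
    (M : Mealy Q A) (hg : M.SelfInvertible) (a : A) :
    ∃ T d : ℕ,
      (∀ v ∈ M.Lan a, T ≤ v.length → M.deg a v = d) ∧
      (∀ v : List A, v ∈ M.Lan a ↔
        ∀ w : List A, w <:+: v → w.length ≤ T + 1 → w ∈ M.Lan a) :=
  stmt15_general M hg a

end AutGrp
end

section
/- Let M = (Q, A, τ) be an invertible Mealy automaton and let u ∈ A* be a nonempty word. Then the set of all finite prefixes of sequences in the orbit P_M · u^ω = { s·u^ω : s ∈ Q* } is a regular language over A (recognized by a deterministic finite automaton). -/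
/-!
Write `ξ = u^ω`, `p = |u|` and `L` for the language; its words of length `n` are the
`s · ξ[0, n)`. Each `s` permutes the words of a fixed length with finite order, so a power of `s`
undoes it there. Hence the left quotient of `L` at `s · ξ[0, n)` is the image of the one at
`ξ[0, n)` under the length-preserving injection `(s @ ξ[0, n)) · _`; in particular the number
`d(n)` of one-letter extensions of a word of length `n` in `L` depends only on `n`.

Periodicity of `ξ` gives `L⁻¹ ξ[0, n + p) ⊆ L⁻¹ ξ[0, n)`, so `d(n + p) ≤ d(n)`, and hence
`d(n + p) = d(n)` for large `n`. Nested prefix-closed trees with the same branching at every level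
coincide, so then `L⁻¹ ξ[0, n + p) = L⁻¹ ξ[0, n)`. Consequently all nonempty left quotients of `L`
are left quotients at words of bounded length, and Myhill–Nerode applies.
-/

open Filter

namespace Language

variable {α : Type*}

noncomputable def degree (L : Language α) (w : List α) : ℕ :=
  {x | x ∈ L.leftQuotient w ∧ x.length = 1}.ncard

theorem leftQuotient_append_mono {L : Language α} {v w : List α}
    (h : L.leftQuotient v ≤ L.leftQuotient w) (x : List α) :
    L.leftQuotient (v ++ x) ≤ L.leftQuotient (w ++ x) := by
  rw [leftQuotient_append, leftQuotient_append]
  exact fun y hy => h hy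

theorem degree_mono [Finite α] {L : Language α} {v w : List α}
    (h : L.leftQuotient v ≤ L.leftQuotient w) : L.degree v ≤ L.degree w :=
  Set.ncard_le_ncard (fun _ hx => ⟨h hx.1, hx.2⟩)
    ((List.finite_length_eq α 1).subset fun _ hx => hx.2)

theorem degree_eq_of_leftQuotient_eq_image {L : Language α} {v w : List α}
    {T : List α → List α} (hT : Function.Injective T) (hlen : ∀ x, (T x).length = x.length)
    (h : L.leftQuotient v = T '' L.leftQuotient w) : L.degree v = L.degree w := by
  rw [degree, degree, ← Set.ncard_image_of_injective {x | x ∈ L.leftQuotient w ∧ _} hT]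
  congr 1
  ext y
  constructor
  · rintro ⟨hy, hl⟩
    obtain ⟨x, hx, rfl⟩ := h ▸ hy
    exact ⟨x, ⟨hx, hlen x ▸ hl⟩, rfl⟩
  · rintro ⟨x, ⟨hx, hl⟩, rfl⟩
    exact ⟨h ▸ ⟨x, hx, rfl⟩, (hlen x).trans hl⟩

theorem leftQuotient_eq_of_le_of_degree_le [Finite α] {L : Language α}
    (hpre : ∀ w x, w ++ x ∈ L → w ∈ L) {v w : List α} (hv : v ∈ L)
    (hle : L.leftQuotient v ≤ L.leftQuotient w)
    (hdeg : ∀ x, v ++ x ∈ L → L.degree (w ++ x) ≤ L.degree (v ++ x)) :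
    L.leftQuotient v = L.leftQuotient w := by
  refine le_antisymm hle fun x hx => ?_
  induction x using List.reverseRecOn with
  | nil => show v ++ [] ∈ L; simpa using hv
  | append_singleton x b ih =>
    have hx' : w ++ x ++ [b] ∈ L := by rw [List.append_assoc]; exact hx
    have hvx : v ++ x ∈ L := ih (hpre _ [b] hx')
    have hext : {y | y ∈ L.leftQuotient (v ++ x) ∧ y.length = 1} =
        {y | y ∈ L.leftQuotient (w ++ x) ∧ y.length = 1} :=
      Set.eq_of_subset_of_ncard_le (fun _ hy => ⟨leftQuotient_append_mono hle x hy.1, hy.2⟩)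
        (hdeg x hvx) ((List.finite_length_eq α 1).subset fun _ hx => hx.2)
    have hb : [b] ∈ {y | y ∈ L.leftQuotient (w ++ x) ∧ y.length = 1} := ⟨hx', rfl⟩
    show v ++ (x ++ [b]) ∈ L
    rw [← List.append_assoc]
    exact (hext ▸ hb).1

end Language

theorem Nat.eventually_add_eq_of_add_le {f : ℕ → ℕ} {p : ℕ} (hf : ∀ n, f (n + p) ≤ f n) :
    ∀ᶠ n in atTop, f (n + p) = f n := by
  -- the window sums are antitone, hence eventually constant
  set W : ℕ → ℕ := fun n => ∑ i ∈ Finset.range p, f (n + i)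
  have hW : ∀ n, W (n + 1) + f n = W n + f (n + p) := fun n => by
    have h₁ := Finset.sum_range_succ (fun i => f (n + i)) p
    have h₂ := Finset.sum_range_succ' (fun i => f (n + i)) p
    simp only [W, Nat.add_zero, ← Nat.add_assoc, Nat.add_right_comm n _ 1] at h₁ h₂ ⊢
    omega
  obtain ⟨N, hN⟩ := WellFoundedLT.antitone_chain_condition (f := W)
    (antitone_nat_of_succ_le fun n => by linarith [hW n, hf n])
  filter_upwards [eventually_ge_atTop N] with n hn
  linarith [hW n, hN n hn, hN (n + 1) (by omega)]

namespace AutGrp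

section

variable {A : Type*}

@[simp] theorem length_seqTake (ξ : ℕ → A) (n : ℕ) : (seqTake ξ n).length = n := by
  simp [seqTake]

theorem seqTake_add (ξ : ℕ → A) (m n : ℕ) :
    seqTake ξ (m + n) = seqTake ξ m ++ seqTake (fun i => ξ (m + i)) n := by
  simp [seqTake, List.range_add]

theorem _root_.Function.Periodic.seqTake_add {ξ : ℕ → A} {p : ℕ} (hξ : Function.Periodic ξ p)
    (n : ℕ) : seqTake ξ (p + n) = seqTake ξ p ++ seqTake ξ n := by
  rw [AutGrp.seqTake_add]
  congr 2
  funext i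
  rw [Nat.add_comm, hξ]

namespace Mealy

variable {Q : Type*}

@[simp] theorem length_actA (M : Mealy Q A) (q : Q) (w : List A) :
    (M.actA q w).length = w.length := by
  induction w generalizing q with
  | nil => rfl
  | cons a w ih => simp [actA, ih]

@[simp] theorem length_actW (M : Mealy Q A) (s : List Q) (w : List A) :
    (M.actW s w).length = w.length := by
  induction s with
  | nil => rfl
  | cons q s ih => simp [actW, ih]

variable {M : Mealy Q A}

theorem actA_injective (h : M.Invertible) (q : Q) : Function.Injective (M.actA q) := by
  intro w w' e
  induction w generalizing q w' with
  | nil => cases w' <;> simp_all [actA]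
  | cons a w ih =>
    cases w' with
    | nil => simp [actA] at e
    | cons a' w' =>
      obtain ⟨ha, hw⟩ := List.cons.inj e
      obtain rfl := (h q).1 ha
      rw [ih (M.t q a) hw]

theorem actW_injective (h : M.Invertible) (s : List Q) : Function.Injective (M.actW s) := by
  induction s with
  | nil => exact fun _ _ => id
  | cons q s ih => exact (actA_injective h q).comp ih

noncomputable def actWOfLength (h : M.Invertible) [Finite A] (s : List Q) (n : ℕ) :
    Equiv.Perm (List.Vector A n) :=
  Equiv.ofBijective (fun w => ⟨M.actW s w.toList, by simp⟩) <|
    Finite.injective_iff_bijective.1 fun _ _ e =>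
      List.Vector.toList_injective (actW_injective h s (congrArg List.Vector.toList e))

theorem actW_surjective [Finite A] (h : M.Invertible) (s : List Q) :
    Function.Surjective (M.actW s) := fun w => by
  obtain ⟨v, hv⟩ := (actWOfLength h s w.length).surjective ⟨w, rfl⟩
  exact ⟨v.toList, congrArg List.Vector.toList hv⟩

theorem exists_actW_leftInverse [Finite A] (h : M.Invertible) (s : List Q) (n : ℕ) :
    ∃ s' : List Q, ∀ w : List A, w.length = n → M.actW s' (M.actW s w) = w := by
  set f := actWOfLength h s n
  have hpow : ∀ k (w : List.Vector A n), M.actW (wpow s k) w.toList = ((f ^ k) w).toList := by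
    intro k
    induction k with
    | zero => exact fun _ => rfl
    | succ k ih =>
      intro w
      rw [pow_succ', Equiv.Perm.mul_apply, wpow, actW_append_states, ih]
      rfl
  refine ⟨wpow s (orderOf f - 1), fun w hw => ?_⟩
  calc M.actW (wpow s (orderOf f - 1)) (M.actW s w)
      = ((f ^ (orderOf f - 1) * f) ⟨w, hw⟩).toList := hpow _ (f ⟨w, hw⟩)
    _ = w := by rw [pow_sub_one_mul (orderOf_pos f).ne', pow_orderOf_eq_one]; rfl

def orbitPrefixes (M : Mealy Q A) (ξ : ℕ → A) : Language A :=
  {w | ∃ s : List Q, w = M.actW s (seqTake ξ w.length)}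

variable {ξ : ℕ → A} {p : ℕ}

theorem actW_seqTake_mem (s : List Q) (n : ℕ) : M.actW s (seqTake ξ n) ∈ M.orbitPrefixes ξ :=
  ⟨s, by simp⟩

theorem mem_orbitPrefixes_of_append_mem {w x : List A} (h : w ++ x ∈ M.orbitPrefixes ξ) :
    w ∈ M.orbitPrefixes ξ := by
  obtain ⟨s, hs⟩ := h
  rw [List.length_append, seqTake_add, actW_append] at hs
  exact ⟨s, (List.append_inj hs (by simp)).1⟩

theorem leftQuotient_actW_seqTake [Finite A] (h : M.Invertible) (s : List Q) (n : ℕ) :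
    (M.orbitPrefixes ξ).leftQuotient (M.actW s (seqTake ξ n)) =
      M.actW (M.stW s (seqTake ξ n)) '' (M.orbitPrefixes ξ).leftQuotient (seqTake ξ n) := by
  ext x
  constructor
  · rintro ⟨s₁, hs₁⟩
    obtain ⟨x, rfl⟩ := actW_surjective h (M.stW s (seqTake ξ n)) x
    obtain ⟨s', hs'⟩ := exists_actW_leftInverse h s (n + x.length)
    refine ⟨x, ⟨s' ++ s₁, ?_⟩, rfl⟩
    rw [← actW_append] at hs₁
    simp only [List.length_append, length_actW, length_seqTake] at hs₁ ⊢
    rw [actW_append_states, ← hs₁, hs' _ (by simp)]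
  · rintro ⟨x, ⟨s₂, hs₂⟩, rfl⟩
    refine ⟨s ++ s₂, ?_⟩
    simp only [List.length_append, length_actW, length_seqTake] at hs₂ ⊢
    rw [actW_append_states, ← hs₂, actW_append]

theorem degree_eq_of_mem [Finite A] (h : M.Invertible) {w : List A}
    (hw : w ∈ M.orbitPrefixes ξ) :
    (M.orbitPrefixes ξ).degree w = (M.orbitPrefixes ξ).degree (seqTake ξ w.length) := by
  obtain ⟨s, hs⟩ := hw
  conv_lhs => rw [hs]
  exact Language.degree_eq_of_leftQuotient_eq_image (actW_injective h _) (length_actW M _)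
    (leftQuotient_actW_seqTake h s _)

theorem leftQuotient_seqTake_add_le (hξ : Function.Periodic ξ p) (n : ℕ) :
    (M.orbitPrefixes ξ).leftQuotient (seqTake ξ (p + n)) ≤
      (M.orbitPrefixes ξ).leftQuotient (seqTake ξ n) := by
  rintro x ⟨s, hs⟩
  refine ⟨M.stW s (seqTake ξ p), ?_⟩
  simp only [List.length_append, length_seqTake] at hs ⊢
  rw [Nat.add_assoc, hξ.seqTake_add, hξ.seqTake_add, actW_append, List.append_assoc] at hs
  exact (List.append_inj hs (by simp)).2

theorem eventually_leftQuotient_seqTake_add_eq [Finite A] (h : M.Invertible)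
    (hξ : Function.Periodic ξ p) :
    ∀ᶠ n in atTop, (M.orbitPrefixes ξ).leftQuotient (seqTake ξ (p + n)) =
      (M.orbitPrefixes ξ).leftQuotient (seqTake ξ n) := by
  set d : ℕ → ℕ := fun n => (M.orbitPrefixes ξ).degree (seqTake ξ n)
  obtain ⟨N, hN⟩ := eventually_atTop.1 <| Nat.eventually_add_eq_of_add_le (f := d) fun n => by
    rw [Nat.add_comm]
    exact Language.degree_mono (leftQuotient_seqTake_add_le hξ n)
  filter_upwards [eventually_ge_atTop N] with n hn
  refine Language.leftQuotient_eq_of_le_of_degree_le (fun _ _ => mem_orbitPrefixes_of_append_mem)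
    (actW_seqTake_mem [] _) (leftQuotient_seqTake_add_le hξ n) fun x hx => ?_
  have hx' : seqTake ξ n ++ x ∈ M.orbitPrefixes ξ := leftQuotient_seqTake_add_le hξ n hx
  rw [degree_eq_of_mem h hx, degree_eq_of_mem h hx']
  simp only [List.length_append, length_seqTake]
  rw [Nat.add_assoc, Nat.add_comm p]
  exact (hN _ (by omega)).ge

theorem leftQuotient_actW_seqTake_add [Finite A] (h : M.Invertible)
    (hξ : Function.Periodic ξ p) {N : ℕ}
    (hN : ∀ n, N ≤ n → (M.orbitPrefixes ξ).leftQuotient (seqTake ξ (p + n)) =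
      (M.orbitPrefixes ξ).leftQuotient (seqTake ξ n))
    (s : List Q) {n : ℕ} (hn : N ≤ n) :
    (M.orbitPrefixes ξ).leftQuotient (M.actW s (seqTake ξ (p + n))) =
      (M.orbitPrefixes ξ).leftQuotient (M.actW (M.stW s (seqTake ξ p)) (seqTake ξ n)) := by
  rw [leftQuotient_actW_seqTake h, leftQuotient_actW_seqTake h, hN n hn, hξ.seqTake_add,
    stW_append]

theorem isRegular_orbitPrefixes [Finite A] (h : M.Invertible) (hξ : Function.Periodic ξ p)
    (hp : 0 < p) :
    (M.orbitPrefixes ξ).IsRegular := by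
  obtain ⟨N, hN⟩ := eventually_atTop.1 (eventually_leftQuotient_seqTake_add_eq h hξ)
  have hshort : ∀ n (s : List Q), ∃ v : List A, v.length < p + N ∧
      (M.orbitPrefixes ξ).leftQuotient (M.actW s (seqTake ξ n)) =
        (M.orbitPrefixes ξ).leftQuotient v := by
    intro n
    induction n using Nat.strong_induction_on with
    | _ n ih =>
      intro s
      by_cases hn : n < p + N
      · exact ⟨_, by simpa using hn, rfl⟩
      · obtain ⟨m, rfl⟩ : ∃ m, n = p + m := ⟨n - p, by omega⟩
        rw [leftQuotient_actW_seqTake_add h hξ hN s (by omega)]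
        exact ih m (by omega) _
  refine .of_finite_range_leftQuotient <|
    ((List.finite_length_lt A (p + N)).image (M.orbitPrefixes ξ).leftQuotient).insert 0 |>.subset ?_
  rintro _ ⟨w, rfl⟩
  by_cases hw : w ∈ M.orbitPrefixes ξ
  · obtain ⟨s, hs⟩ := hw
    obtain ⟨v, hv, he⟩ := hshort w.length s
    rw [← hs] at he
    exact Or.inr ⟨v, hv, he.symm⟩
  · exact Or.inl <| Language.ext fun x =>
      ⟨fun hx => hw (mem_orbitPrefixes_of_append_mem hx),
        fun hx => (Language.notMem_zero x hx).elim⟩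

theorem seqTake_actSeq [Nonempty A] (M : Mealy Q A) (s : List Q) (ξ : ℕ → A) (n : ℕ) :
    seqTake (M.actSeq s ξ) n = M.actW s (seqTake ξ n) := by
  refine List.ext_getElem (by simp) fun i hi _ => ?_
  rw [length_seqTake] at hi
  obtain ⟨k, rfl⟩ : ∃ k, n = i + 1 + k := ⟨n - (i + 1), by omega⟩
  simp only [seqTake_add ξ (i + 1), actW_append]
  rw [List.getElem_append_left (by simp)]
  simp [seqTake, actSeq]

end Mealy

theorem periodic_periodic [Nonempty A] (u : List A) :
    Function.Periodic (periodic u) u.length := fun n => by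
  simp [periodic, prePeriodic]

end

theorem stmt16_general {Q A : Type*} [Fintype A] [Nonempty A]
    (M : Mealy Q A) (hinv : M.Invertible) (u : List A) (hu : u ≠ []) :
    IsRegular {w : List A | ∃ s : List Q,
      w = seqTake (M.actSeq s (periodic u)) w.length} := by
  obtain ⟨σ, _, dfa, hdfa⟩ :=
    M.isRegular_orbitPrefixes hinv (periodic_periodic u) (List.length_pos_iff.2 hu)
  refine ⟨σ, inferInstance, dfa, fun w => ?_⟩
  simp only [hdfa, Mealy.seqTake_actSeq]
  rfl

/-- For an invertible Mealy automaton `M` and a nonempty word `u ∈ A*`,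
the set of all finite prefixes of sequences in the orbit `P_M · u^ω` is a regular language. -/
theorem stmt16 {Q A : Type*} [Fintype Q] [Nonempty Q] [Fintype A] [Nonempty A]
    (M : Mealy Q A) (hinv : M.Invertible) (u : List A) (hu : u ≠ []) :
    IsRegular {w : List A | ∃ s : List Q,
      w = seqTake (M.actSeq s (periodic u)) w.length} :=
  stmt16_general M hinv u hu

end AutGrp
end
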